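/- For every n ≥ 3, the mutual-visibility number of the double graph of the path P_n equals n + 2. -/

import Mathlib

open SimpleGraph

variable {V : Type*}

/-- A walk is a shortest path if it is a path and its length equals the distance
between its endpoints. -/
def SimpleGraph.IsShortestPath (G : SimpleGraph V) {u v : V} (p : G.Walk u v) : Prop :=
  p.IsPath ∧ p.length = G.dist u v

/-- `S` is a general position set: no three vertices of `S` lie on a common shortest path. -/
def SimpleGraph.IsGPSet (G : SimpleGraph V) (S : Set V) : Prop :=
  ∀ ⦃u v : V⦄ (p : G.Walk u v), G.IsShortestPath p →
    ∀ x ∈ S, ∀ y ∈ S, ∀ z ∈ S, x ≠ y → x ≠ z → y ≠ z →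
      ¬ (x ∈ p.support ∧ y ∈ p.support ∧ z ∈ p.support)

/-- `u` and `v` are `S`-visible: some shortest `u,v`-path has no internal vertex in `S`. -/
def SimpleGraph.SVisible (G : SimpleGraph V) (S : Set V) (u v : V) : Prop :=
  ∃ p : G.Walk u v, G.IsShortestPath p ∧ ∀ w ∈ p.support, w ≠ u → w ≠ v → w ∉ S

/-- `S` is a mutual-visibility set. -/
def SimpleGraph.IsMVSet (G : SimpleGraph V) (S : Set V) : Prop :=
  ∀ u ∈ S, ∀ v ∈ S, u ≠ v → G.SVisible S u v

/-- `S` is a total mutual-visibility set. -/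
def SimpleGraph.IsTotalMVSet (G : SimpleGraph V) (S : Set V) : Prop :=
  ∀ u v : V, u ≠ v → G.SVisible S u v

/-- `S` is an outer mutual-visibility set. -/
def SimpleGraph.IsOuterMVSet (G : SimpleGraph V) (S : Set V) : Prop :=
  G.IsMVSet S ∧ ∀ u ∈ S, ∀ v ∉ S, u ≠ v → G.SVisible S u v

/-- The mutual-visibility number `μ(G)`. -/
noncomputable def SimpleGraph.mutualVisibilityNumber (G : SimpleGraph V) [Fintype V] : ℕ :=
  sSup {k | ∃ S : Finset V, G.IsMVSet ↑S ∧ S.card = k}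

/-- The total mutual-visibility number `μ_t(G)`. -/
noncomputable def SimpleGraph.totalMutualVisibilityNumber (G : SimpleGraph V) [Fintype V] : ℕ :=
  sSup {k | ∃ S : Finset V, G.IsTotalMVSet ↑S ∧ S.card = k}

/-- The outer mutual-visibility number `μ_o(G)`. -/
noncomputable def SimpleGraph.outerMutualVisibilityNumber (G : SimpleGraph V) [Fintype V] : ℕ :=
  sSup {k | ∃ S : Finset V, G.IsOuterMVSet ↑S ∧ S.card = k}

/-- The general position number `gp(G)`. -/
noncomputable def SimpleGraph.gpNumber (G : SimpleGraph V) [Fintype V] : ℕ :=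
  sSup {k | ∃ S : Finset V, G.IsGPSet ↑S ∧ S.card = k}

/-- The double graph `D(G)`: two copies of each vertex, `(u, b)` adjacent to `(v, c)`
iff `u` adjacent to `v` in `G`. -/
def SimpleGraph.doubleGraph (G : SimpleGraph V) : SimpleGraph (V × Bool) where
  Adj x y := G.Adj x.1 y.1
  symm := ⟨fun _ _ h => G.adj_symm h⟩
  loopless := ⟨fun x h => G.irrefl (v := x.1) h⟩

/-- The Mycielskian `M(G)`: `some (u, false)` are the original vertices, `some (u, true)`
their copies, and `none` is the apex vertex `v*`. -/
def SimpleGraph.mycielskian (G : SimpleGraph V) : SimpleGraph (Option (V × Bool)) where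
  Adj x y := match x, y with
    | some (u, false), some (v, false) => G.Adj u v
    | some (u, false), some (v, true) => G.Adj u v
    | some (u, true), some (v, false) => G.Adj u v
    | some (_, true), none => True
    | none, some (_, true) => True
    | _, _ => False
  symm := by
    constructor
    rintro (_ | ⟨u, (_|_)⟩) (_ | ⟨v, (_|_)⟩) h <;>
      first
        | exact h
        | exact G.adj_symm h
  loopless := by
    constructor
    rintro (_ | ⟨u, (_|_)⟩) h
    · exact h
    · exact G.irrefl h
    · exact h


/-!
Columns of `D(P_n)` are the vertices of `P_n`, and every walk in `D(P_n)` crosses every column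
between its ends. Hence, if both twins of a column lie in a mutual-visibility set `S`, no two
vertices of `S` lie strictly on opposite sides of that column. So a column carrying both twins
is the leftmost or the rightmost column met by `S`: at most two columns do, and
`|S| ≤ n + 2`. Equality is attained by one twin of every column together with the other twin
of the two end columns: two vertices in different columns see each other along the other
twins of the columns in between, and the twins of an end column see each other through the
other twin of its (interior, as `n ≥ 3`) neighbour.
-/

open Finset

theorem Finset.card_le_two_of_forall_not_lt_lt {α : Type*} [LinearOrder α] {s : Finset α}
    (h : ∀ a ∈ s, ∀ b ∈ s, ∀ c ∈ s, a < b → b < c → False) : #s ≤ 2 := by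
  rcases s.eq_empty_or_nonempty with rfl | hs
  · simp
  have hsub : s ⊆ {s.min' hs, s.max' hs} := by
    intro b hb
    by_contra hne
    simp only [mem_insert, mem_singleton, not_or] at hne
    exact h _ (s.min'_mem hs) b hb _ (s.max'_mem hs)
      ((s.min'_le b hb).lt_of_ne (Ne.symm hne.1)) ((s.le_max' b hb).lt_of_ne hne.2)
  exact (card_le_card hsub).trans card_le_two

theorem Finset.card_le_card_add_card_twins {α : Type*} [Fintype α] [DecidableEq α]
    (S : Finset (α × Bool)) :
    #S ≤ Fintype.card α + #{a | (a, false) ∈ S ∧ (a, true) ∈ S} := by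
  set T := ({a | (a, false) ∈ S ∧ (a, true) ∈ S} : Finset α) ×ˢ {true}
  have hinj : Set.InjOn Prod.fst (↑(S \ T) : Set (α × Bool)) := by
    rintro ⟨a, b⟩ hx ⟨a', b'⟩ hy (rfl : a = a')
    simp only [coe_sdiff, Set.mem_sdiff, mem_coe, T, mem_product, mem_filter, mem_univ,
      true_and, mem_singleton] at hx hy
    cases b <;> cases b' <;> simp_all
  calc #S ≤ #(S \ T) + #T := card_le_card_sdiff_add_card
    _ ≤ Fintype.card α + #{a | (a, false) ∈ S ∧ (a, true) ∈ S} := by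
      gcongr
      · simpa using card_le_card_of_injOn Prod.fst (fun _ _ => mem_univ _) hinj
      · simp [T]

namespace SimpleGraph

variable {G : SimpleGraph V} {S : Set V} {u v : V}

theorem SVisible.symm (h : G.SVisible S u v) : G.SVisible S v u := by
  obtain ⟨p, ⟨hpath, hlen⟩, hS⟩ := h
  refine ⟨p.reverse, ⟨hpath.reverse, by rw [Walk.length_reverse, hlen, dist_comm]⟩, ?_⟩
  intro w hw hwv hwu
  exact hS w (by simpa using hw) hwu hwv

theorem sVisible_of_length_le_dist (p : G.Walk u v) (hp : p.length ≤ G.dist u v)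
    (hS : ∀ w ∈ p.support, w ≠ u → w ≠ v → w ∉ S) : G.SVisible S u v :=
  have hlen : p.length = G.dist u v := le_antisymm hp (dist_le p)
  ⟨p, ⟨p.isPath_of_length_eq_dist hlen, hlen⟩, hS⟩

section Height

variable {f : V → ℕ} (hf : ∀ x y, G.Adj x y → f y ≤ f x + 1)
include hf

theorem Walk.le_add_length (p : G.Walk u v) : f v ≤ f u + p.length := by
  induction p with
  | nil => simp
  | cons h _ ih => have := hf _ _ h; simp only [Walk.length_cons]; omega

theorem Reachable.le_add_dist (h : G.Reachable u v) : f v ≤ f u + G.dist u v := by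
  obtain ⟨p, hp⟩ := h.exists_walk_length_eq_dist
  exact hp ▸ p.le_add_length hf

theorem Walk.exists_mem_support_of_le (p : G.Walk u v) {m : ℕ} (hu : f u ≤ m) (hv : m ≤ f v) :
    ∃ w ∈ p.support, f w = m := by
  induction p with
  | @nil a => exact ⟨a, by simp, by omega⟩
  | @cons a b _ h q ih =>
    by_cases ha : f a = m
    · exact ⟨a, by simp, ha⟩
    · obtain ⟨w, hw, hwm⟩ := ih (by have := hf _ _ h; omega) hv
      exact ⟨w, by simp [hw], hwm⟩

end Height

theorem doubleGraph_adj {x y : V × Bool} : G.doubleGraph.Adj x y ↔ G.Adj x.1 y.1 := Iff.rfl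

theorem doubleGraph_sVisible_twins {S : Set (V × Bool)} {w : V} (huw : G.Adj u w) {b c : Bool}
    (hbc : b ≠ c) {d : Bool} (hw : (w, d) ∉ S) : G.doubleGraph.SVisible S (u, b) (u, c) := by
  have hadj : G.doubleGraph.Adj (u, b) (w, d) := huw
  have hadj' : G.doubleGraph.Adj (w, d) (u, c) := huw.symm
  let p : G.doubleGraph.Walk (u, b) (u, c) := .cons hadj (.cons hadj' .nil)
  have hne : (u, b) ≠ (u, c) := by simp [hbc]
  have hdist_ne_one : G.doubleGraph.dist (u, b) (u, c) ≠ 1 := fun h =>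
    G.loopless.irrefl u (doubleGraph_adj.mp (dist_eq_one_iff_adj.mp h))
  have hdist_ne_zero : G.doubleGraph.dist (u, b) (u, c) ≠ 0 :=
    dist_ne_zero_iff_ne_and_reachable.mpr ⟨hne, ⟨p⟩⟩
  have hlen : p.length = 2 := rfl
  refine sVisible_of_length_le_dist p (by omega) ?_
  intro z hz hzu hzv
  simp only [p, Walk.support_cons, Walk.support_nil, List.mem_cons, List.not_mem_nil,
    or_false] at hz
  obtain rfl | rfl | rfl := hz
  exacts [absurd rfl hzu, hw, absurd rfl hzv]

variable {n : ℕ}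

theorem doubleGraph_pathGraph_adj {x y : Fin n × Bool} :
    (pathGraph n).doubleGraph.Adj x y ↔ x.1.val + 1 = y.1.val ∨ y.1.val + 1 = x.1.val :=
  pathGraph_adj

theorem doubleGraph_pathGraph_adj_le_succ (x y : Fin n × Bool)
    (h : (pathGraph n).doubleGraph.Adj x y) : y.1.val ≤ x.1.val + 1 := by
  have := doubleGraph_pathGraph_adj.mp h
  omega

theorem exists_doubleGraph_pathGraph_walk_via_true {x y : Fin n × Bool} (hxy : x.1.val < y.1.val) :
    ∃ p : (pathGraph n).doubleGraph.Walk x y, p.length = y.1.val - x.1.val ∧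
      ∀ z ∈ p.support,
        z = x ∨ z = y ∨ (z.2 = true ∧ x.1.val < z.1.val ∧ z.1.val < y.1.val) := by
  obtain ⟨k, hk⟩ : ∃ k, y.1.val = x.1.val + k + 1 := ⟨y.1.val - x.1.val - 1, by omega⟩
  clear hxy
  induction k generalizing x with
  | zero =>
    refine ⟨.cons (doubleGraph_pathGraph_adj.mpr (.inl (by omega))) .nil,
      by rw [Walk.length_cons, Walk.length_nil]; omega, ?_⟩
    simp
  | succ k ih =>
    let x' : Fin n × Bool := (⟨x.1.val + 1, by omega⟩, true)
    obtain ⟨q, hq, hqs⟩ := ih (x := x') (by simp only [x']; omega)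
    have hxx' : (pathGraph n).doubleGraph.Adj x x' := doubleGraph_pathGraph_adj.mpr (.inl rfl)
    refine ⟨.cons hxx' q, by simp only [Walk.length_cons, hq, x']; omega, ?_⟩
    intro z hz
    rcases (Walk.mem_support_iff _).mp hz with rfl | hz
    · exact .inl rfl
    rcases hqs z hz with rfl | rfl | ⟨h2, h1, h3⟩
    · exact .inr (.inr ⟨rfl, by simp only [x']; omega, by simp only [x']; omega⟩)
    · exact .inr (.inl rfl)
    · exact .inr (.inr ⟨h2, by simp only [x'] at h1; omega, h3⟩)

theorem doubleGraph_pathGraph_sVisible_of_lt {S : Set (Fin n × Bool)} {x y : Fin n × Bool}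
    (hxy : x.1.val < y.1.val)
    (hS : ∀ i : Fin n, x.1.val < i.val → i.val < y.1.val → (i, true) ∉ S) :
    (pathGraph n).doubleGraph.SVisible S x y := by
  obtain ⟨p, hp, hsupp⟩ := exists_doubleGraph_pathGraph_walk_via_true hxy
  refine sVisible_of_length_le_dist p ?_ ?_
  · have := Reachable.le_add_dist (f := fun z => z.1.val) doubleGraph_pathGraph_adj_le_succ ⟨p⟩
    omega
  · rintro ⟨i, b⟩ hz hzx hzy
    obtain rfl | rfl | ⟨rfl, h1, h2⟩ := hsupp _ hz
    · exact absurd rfl hzx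
    · exact absurd rfl hzy
    · exact hS i h1 h2

theorem IsMVSet.doubleGraph_pathGraph_not_between {S : Set (Fin n × Bool)}
    (hS : (pathGraph n).doubleGraph.IsMVSet S) {c : Fin n} (hf : (c, false) ∈ S)
    (ht : (c, true) ∈ S) {u v : Fin n × Bool} (hu : u ∈ S) (hv : v ∈ S) (huc : u.1 < c)
    (hcv : c < v.1) : False := by
  obtain ⟨p, -, hp⟩ := hS u hu v hv (by rintro rfl; exact lt_asymm huc hcv)
  obtain ⟨⟨i, b⟩, hz, hi⟩ := p.exists_mem_support_of_le (f := fun z => z.1.val)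
    doubleGraph_pathGraph_adj_le_succ (m := c.val) huc.le hcv.le
  obtain rfl : i = c := Fin.ext hi
  refine hp _ hz (by rintro rfl; exact huc.ne rfl) (by rintro rfl; exact hcv.ne rfl) ?_
  cases b <;> assumption

theorem card_le_of_isMVSet_doubleGraph_pathGraph {S : Finset (Fin n × Bool)}
    (hS : (pathGraph n).doubleGraph.IsMVSet ↑S) : #S ≤ n + 2 := by
  calc #S ≤ n + #{c | (c, false) ∈ S ∧ (c, true) ∈ S} := by
        simpa using S.card_le_card_add_card_twins
    _ ≤ n + 2 := by
      gcongr
      refine card_le_two_of_forall_not_lt_lt fun a ha b hb c hc hab hbc => ?_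
      simp only [mem_filter, mem_univ, true_and] at ha hb hc
      exact hS.doubleGraph_pathGraph_not_between (u := (a, false)) hb.1 hb.2 ha.1 hc.1 hab hbc

def doublePathMVSet (n : ℕ) : Finset (Fin n × Bool) :=
  univ ×ˢ {false} ∪ ({i : Fin n | i.val = 0 ∨ i.val = n - 1} : Finset (Fin n)) ×ˢ {true}

theorem mem_doublePathMVSet {z : Fin n × Bool} :
    z ∈ doublePathMVSet n ↔ z.2 = false ∨ z.1.val = 0 ∨ z.1.val = n - 1 := by
  obtain ⟨i, b⟩ := z
  cases b <;> simp [doublePathMVSet]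

theorem card_doublePathMVSet (hn : 2 ≤ n) : #(doublePathMVSet n) = n + 2 := by
  have hends : ({i : Fin n | i.val = 0 ∨ i.val = n - 1} : Finset (Fin n)) =
      {⟨0, by omega⟩, ⟨n - 1, by omega⟩} := by
    ext i
    simp [Fin.ext_iff]
  rw [doublePathMVSet, card_union_of_disjoint (disjoint_product.mpr (.inr (by simp))),
    card_product, card_product, hends, card_pair (by simp only [ne_eq, Fin.ext_iff]; omega)]
  simp

theorem isMVSet_doublePathMVSet (hn : 3 ≤ n) :
    (pathGraph n).doubleGraph.IsMVSet ↑(doublePathMVSet n) := by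
  have hS : ∀ i : Fin n, 0 < i.val → i.val < n - 1 → (i, true) ∉ doublePathMVSet n := by
    intro i h0 h1
    simp only [mem_doublePathMVSet, Bool.true_eq_false, false_or]
    omega
  intro u hu v hv huv
  rcases lt_trichotomy u.1.val v.1.val with h | h | h
  · exact doubleGraph_pathGraph_sVisible_of_lt h fun i h1 h2 => hS i (by omega) (by omega)
  · obtain ⟨c, b⟩ := u
    obtain ⟨c', b'⟩ := v
    obtain rfl : c = c' := Fin.ext h
    have hbb' : b ≠ b' := by rintro rfl; exact huv rfl
    have hc : c.val = 0 ∨ c.val = n - 1 := by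
      simp only [mem_coe, mem_doublePathMVSet] at hu hv
      cases b <;> cases b' <;> simp_all
    obtain ⟨w, hcw, hw⟩ :
        ∃ w : Fin n, (pathGraph n).Adj c w ∧ (w, true) ∉ doublePathMVSet n := by
      rcases hc with hc | hc
      · exact ⟨⟨1, by omega⟩, pathGraph_adj.mpr (.inl (by simp only [hc])), hS _ one_pos
          (by dsimp only; omega)⟩
      · exact ⟨⟨n - 2, by omega⟩, pathGraph_adj.mpr (.inr (by dsimp only; omega)),
          hS _ (by dsimp only; omega) (by dsimp only; omega)⟩
    exact doubleGraph_sVisible_twins hcw hbb' hw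
  · exact (doubleGraph_pathGraph_sVisible_of_lt h fun i h1 h2 => hS i (by omega) (by omega)).symm

end SimpleGraph

theorem mu_double_path (n : ℕ) (hn : 3 ≤ n) :
    (SimpleGraph.pathGraph n).doubleGraph.mutualVisibilityNumber = n + 2 := by
  refine IsGreatest.csSup_eq ⟨⟨doublePathMVSet n, isMVSet_doublePathMVSet hn,
    card_doublePathMVSet (by omega)⟩, ?_⟩
  rintro k ⟨S, hS, rfl⟩
  exact card_le_of_isMVSet_doubleGraph_pathGraph hS
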